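/- arXiv:math/0305176 — 2 statements merged into one kernel-verified Lean document; each statement's English description precedes it below -/
import Mathlib

section
/- In a strict categorical group, the Peiffer identity holds for arrows with source I: for any arrows e, ε with source I, letting t(e) denote the target of e, one has 1_{t(e)} · ε · (1_{t(e)})⁻¹ = e · ε · e⁻¹, where · denotes the group multiplication of arrows. -/
/-- A strict categorical group: a small category whose sets of objects and of
arrows carry group structures, such that source, target, and identity-arrow
assignment are group homomorphisms, and the group multiplication of arrows
satisfies the middle-four interchange law with composition. -/
structure StrictCatGroup where
  /-- the set (type) of objects -/
  Obj : Type*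
  /-- the set (type) of arrows -/
  Arr : Type*
  [objGroup : Group Obj]
  [arrGroup : Group Arr]
  /-- the source map, a group homomorphism -/
  src : Arr →* Obj
  /-- the target map, a group homomorphism -/
  tgt : Arr →* Obj
  /-- the identity-arrow map, a group homomorphism -/
  idArr : Obj →* Arr
  src_idArr : ∀ g : Obj, src (idArr g) = g
  tgt_idArr : ∀ g : Obj, tgt (idArr g) = g
  /-- composition (diagrammatic order): `comp f g` is defined (constrained by the
  axioms) when `tgt f = src g`. -/
  comp : Arr → Arr → Arr
  src_comp : ∀ f g : Arr, tgt f = src g → src (comp f g) = src f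
  tgt_comp : ∀ f g : Arr, tgt f = src g → tgt (comp f g) = tgt g
  idArr_comp : ∀ f : Arr, comp (idArr (src f)) f = f
  comp_idArr : ∀ f : Arr, comp f (idArr (tgt f)) = f
  comp_assoc : ∀ f g h : Arr, tgt f = src g → tgt g = src h →
    comp (comp f g) h = comp f (comp g h)
  /-- middle-four interchange: whenever `f,g` and `f',g'` are composable pairs,
  `(f∘g)·(f'∘g') = (f·f')∘(g·g')`. -/
  interchange : ∀ f f' g g' : Arr, tgt f = src g → tgt f' = src g' →
    comp f g * comp f' g' = comp (f * f') (g * g')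

attribute [instance] StrictCatGroup.objGroup StrictCatGroup.arrGroup

/-- The Peiffer identity in a strict categorical group: for arrows `e, ε` with
source the identity object `I`, conjugation by the identity arrow of the
target of `e` agrees with conjugation by `e` itself. -/
theorem peiffer_identity (C : StrictCatGroup) (e ε : C.Arr)
    (hes : C.src e = 1) (hεs : C.src ε = 1) :
    C.idArr (C.tgt e) * ε * (C.idArr (C.tgt e))⁻¹ = e * ε * e⁻¹ := by
  have hid1 : C.idArr 1 = 1 := map_one C.idArr
  have hcomp1 : ∀ f : C.Arr, C.src f = 1 → C.comp 1 f = f := fun f hf => by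
    have h := C.idArr_comp f
    rwa [hf, hid1] at h
  have he1 : C.src e⁻¹ = 1 := by rw [map_inv, hes, inv_one]
  have hεc : C.comp 1 ε = ε := hcomp1 ε hεs
  have heic : C.comp 1 e⁻¹ = e⁻¹ := hcomp1 e⁻¹ he1
  -- step 1: e * ε = comp e (idArr (tgt e) * ε)
  have step1 : e * ε = C.comp e (C.idArr (C.tgt e) * ε) := by
    conv_lhs => rw [← C.comp_idArr e, ← hεc]
    rw [C.interchange e 1 (C.idArr (C.tgt e)) ε (C.src_idArr _).symm
      (by rw [map_one, hεs]), mul_one]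
  -- step 2: e * ε * e⁻¹ = comp e (idArr (tgt e) * ε * e⁻¹)
  have step2 : e * ε * e⁻¹ = C.comp e (C.idArr (C.tgt e) * ε * e⁻¹) := by
    rw [step1]
    conv_lhs => rw [← heic]
    rw [C.interchange e 1 (C.idArr (C.tgt e) * ε) e⁻¹
      (by simp [map_mul, C.src_idArr, hεs]) (by rw [map_one, he1]), mul_one]
  -- comp e (idArr (tgt e) * e⁻¹) = 1
  have hB : C.comp e (C.idArr (C.tgt e) * e⁻¹) = 1 := by
    have h := C.interchange e 1 (C.idArr (C.tgt e)) e⁻¹ (C.src_idArr _).symm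
      (by rw [map_one, he1])
    rw [C.comp_idArr e, heic, mul_one, mul_inv_cancel] at h
    exact h.symm
  have hA : C.src (C.idArr (C.tgt e) * ε * (C.idArr (C.tgt e))⁻¹) = 1 := by
    simp [map_mul, map_inv, C.src_idArr, hεs]
  have hAc : C.comp 1 (C.idArr (C.tgt e) * ε * (C.idArr (C.tgt e))⁻¹)
      = C.idArr (C.tgt e) * ε * (C.idArr (C.tgt e))⁻¹ := hcomp1 _ hA
  have h := C.interchange 1 e (C.idArr (C.tgt e) * ε * (C.idArr (C.tgt e))⁻¹)
    (C.idArr (C.tgt e) * e⁻¹) (by rw [map_one, hA])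
    (by simp [map_mul, C.src_idArr, he1])
  rw [hAc, hB, mul_one, one_mul] at h
  have hgrp : C.idArr (C.tgt e) * ε * (C.idArr (C.tgt e))⁻¹ *
      (C.idArr (C.tgt e) * e⁻¹) = C.idArr (C.tgt e) * ε * e⁻¹ := by group
  rw [hgrp] at h
  rw [h, step2]
end

section
/- In a strict categorical group 𝒢, let G be the group of objects and let E be the subgroup of arrows with source the identity object I, on which G acts by g▷e := 1_g · e · (1_g)⁻¹. Then the map from the semidirect product E ⋊ G (with multiplication (e, g)·(ε, γ) = (e·(g▷ε), g·γ)) to the group of arrows of 𝒢 given by (e, g) ↦ e · 1_g is a group isomorphism. -/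
/-- In a strict categorical group `𝒢` with object group `G` and fiber group
`E = ker(src)` (arrows with source the identity object), on which `G` acts by
`g ▷ e := 1_g · e · (1_g)⁻¹`, the map `(e, g) ↦ e · 1_g` from the semidirect
product `E ⋊ G` (with multiplication `(e, g)·(ε, γ) = (e·(g ▷ ε), g·γ)`) to the
group of arrows is a group isomorphism: it is bijective and it carries the
semidirect-product multiplication to the multiplication of arrows. -/
theorem semidirect_iso_arrows (C : StrictCatGroup) :
    Function.Bijective
      (fun p : C.src.ker × C.Obj => (p.1 : C.Arr) * C.idArr p.2) ∧
    ∀ (e ε : C.src.ker) (g γ : C.Obj),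
      ((e : C.Arr) * (C.idArr g * (ε : C.Arr) * (C.idArr g)⁻¹)) * C.idArr (g * γ) =
        ((e : C.Arr) * C.idArr g) * ((ε : C.Arr) * C.idArr γ) := by
  constructor
  · apply Function.bijective_iff_has_inverse.2
    refine ⟨fun f => (⟨f * (C.idArr (C.src f))⁻¹, ?_⟩, C.src f), fun p => ?_, fun f => ?_⟩
    · simp [MonoidHom.mem_ker, C.src_idArr]
    · obtain ⟨⟨e, he⟩, g⟩ := p
      rw [MonoidHom.mem_ker] at he
      ext <;> simp [C.src_idArr, he]
    · simp [C.src_idArr]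
  · intro e ε g γ
    simp [map_mul, mul_assoc]
end
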